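/- Let H be a finite connected simple graph not isomorphic to K2 and let u be a leaf of H. Then the sibling equivalence class of u in H is the singleton {u}, and the vertex {u} is a leaf of the quotient graph ρ(H). -/

import Mathlib

open SimpleGraph

universe u

/-- The closed neighborhood of a vertex. -/
def closedNbhd {V : Type u} (G : SimpleGraph V) (v : V) : Set V :=
  insert v (G.neighborSet v)

/-- Two vertices are siblings if they share the same closed neighborhood. -/
def Sibling {V : Type u} (G : SimpleGraph V) (u v : V) : Prop :=
  closedNbhd G u = closedNbhd G v

/-- A leaf is a vertex of degree one. -/
def IsLeaf {V : Type u} (G : SimpleGraph V) (v : V) : Prop :=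
  Nat.card (G.neighborSet v) = 1

/-- The tuft number: the maximal number of leaves adjacent to a single vertex. -/
noncomputable def tuftNumber {V : Type u} (G : SimpleGraph V) : ℕ :=
  ⨆ v : V, Nat.card {u | IsLeaf G u ∧ G.Adj v u}

/-- The sibling number: the maximum over vertices `v` of the number of vertices sharing
the closed neighborhood of `v`, minus one. -/
noncomputable def siblingNumber {V : Type u} (G : SimpleGraph V) : ℕ :=
  ⨆ v : V, (Nat.card {u | Sibling G u v} - 1)

/-- The complete graph on two vertices. -/
def K2 : SimpleGraph (Fin 2) := ⊤

/-- The sibling relation as a setoid. -/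
def siblingSetoid {V : Type u} (G : SimpleGraph V) : Setoid V :=
  ⟨Sibling G, ⟨fun _ => rfl, fun {_ _} h => Eq.symm h, fun {_ _ _} h h' => Eq.trans h h'⟩⟩

/-- `rho G` is the quotient of `G` by the sibling relation: vertices are sibling
equivalence classes, two distinct classes being adjacent iff some pair of
representatives is adjacent. -/
def rho {V : Type u} (G : SimpleGraph V) : SimpleGraph (Quotient (siblingSetoid G)) where
  Adj A B := A ≠ B ∧ ∃ u v : V, Quotient.mk (siblingSetoid G) u = A ∧
      Quotient.mk (siblingSetoid G) v = B ∧ G.Adj u v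
  symm := by
    refine ⟨?_⟩
    rintro A B ⟨hne, u, v, hu, hv, h⟩
    exact ⟨hne.symm, v, u, hv, hu, h.symm⟩
  loopless := by
    refine ⟨?_⟩
    rintro A ⟨hne, -⟩
    exact hne rfl

/-- `lamS G S` is the induced subgraph on the complement of `S`. -/
def lamS {V : Type u} (G : SimpleGraph V) (S : Set V) : SimpleGraph ↥(Sᶜ) :=
  SimpleGraph.induce Sᶜ G

/-- `lam G` is the induced subgraph on the set of non-leaf vertices. -/
def lam {V : Type u} (G : SimpleGraph V) : SimpleGraph ↥{v : V | ¬ IsLeaf G v} :=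
  SimpleGraph.induce {v : V | ¬ IsLeaf G v} G

/-- A finite graph, bundled with its vertex type. -/
structure FinGraph : Type (u + 1) where
  V : Type u
  [finite : Finite V]
  G : SimpleGraph V

attribute [instance] FinGraph.finite

/-- One reduction step: remove all leaves, then contract each sibling class to a point. -/
def redStep (X : FinGraph.{u}) : FinGraph.{u} :=
  ⟨Quotient (siblingSetoid (lam X.G)), rho (lam X.G)⟩

/-- The reduction of a finite graph: iterate `redStep` until it stabilizes (up to
isomorphism this happens after at most `Nat.card X.V` steps). -/
noncomputable def reduction (X : FinGraph.{u}) : FinGraph.{u} :=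
  redStep^[Nat.card X.V] X

/-- `G` contains an induced cycle on `n` vertices. -/
def HasInducedCycle {V : Type u} (G : SimpleGraph V) (n : ℕ) : Prop :=
  ∃ s : Set V, Nonempty (SimpleGraph.induce s G ≃g cycleGraph n)

/-- A graph is chordal if it has no induced cycle on four or more vertices. -/
def Chordal {V : Type u} (G : SimpleGraph V) : Prop :=
  ∀ m : ℕ, 4 ≤ m → ¬ HasInducedCycle G m

/-- The setoid identifying isomorphic graphs on `Fin n` satisfying a property `P`. -/
def graphSetoid (n : ℕ) (P : SimpleGraph (Fin n) → Prop) :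
    Setoid {G : SimpleGraph (Fin n) // P G} :=
  ⟨fun G H => Nonempty (G.1 ≃g H.1),
    ⟨fun _ => ⟨Iso.refl⟩, fun ⟨e⟩ => ⟨e.symm⟩, fun ⟨e⟩ ⟨f⟩ => ⟨e.trans f⟩⟩⟩

/-- The number of isomorphism classes of graphs on `n` vertices satisfying `P`. -/
noncomputable def numClasses (n : ℕ) (P : SimpleGraph (Fin n) → Prop) : ℕ :=
  Nat.card (Quotient (graphSetoid n P))

/-! A leaf `u` with neighbour `w` has `N[u] = {u, w}`, so its only possible sibling is `w`, and then
`N[w] = {u, w}` too: the edge `uw` is closed under adjacency, hence by connectivity it is the whole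
graph, which is `K2`. With its class a singleton, the class of `u` has the class of `w` as its only
neighbour in `ρ(H)`. -/

section
variable {V : Type*} {G : SimpleGraph V} {u v w : V}

lemma isLeaf_iff_exists_neighborSet_eq_singleton :
    IsLeaf G v ↔ ∃ w, G.neighborSet v = {w} := by
  rw [IsLeaf, Nat.card_coe_set_eq, Set.ncard_eq_one]

lemma neighborSet_eq_closedNbhd_sdiff (v : V) : G.neighborSet v = closedNbhd G v \ {v} :=
  (Set.insert_sdiff_self_of_notMem (G.notMem_neighborSet_self)).symm

lemma adj_of_neighborSet_eq_singleton (h : G.neighborSet u = {w}) : G.Adj u w := by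
  rw [← mem_neighborSet, h]
  rfl

lemma closedNbhd_eq_pair_of_neighborSet_eq (h : G.neighborSet u = {w}) :
    closedNbhd G u = {u, w} := by
  rw [closedNbhd, h]

lemma eq_and_neighborSet_eq_of_sibling (h : G.neighborSet u = {w}) (hs : Sibling G u v)
    (hvu : v ≠ u) : v = w ∧ G.neighborSet w = {u} := by
  have hv : v ∈ closedNbhd G u := hs ▸ Set.mem_insert v _
  rw [closedNbhd_eq_pair_of_neighborSet_eq h] at hv
  obtain rfl : v = w := hv.resolve_left hvu
  refine ⟨rfl, ?_⟩
  rw [neighborSet_eq_closedNbhd_sdiff, ← hs, closedNbhd_eq_pair_of_neighborSet_eq h,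
    Set.pair_sdiff_right hvu.symm]

lemma SimpleGraph.Connected.eq_or_eq_of_neighborSet_eq (hc : G.Connected)
    (hu : G.neighborSet u = {w}) (hw : G.neighborSet w = {u}) (x : V) : x = u ∨ x = w := by
  have hreach := (reachable_iff_reflTransGen u x).mp (hc u x)
  induction hreach with
  | refl => exact .inl rfl
  | tail _ hadj ih =>
    rcases ih with rfl | rfl
    · exact .inr (by simpa [← mem_neighborSet, hu] using hadj)
    · exact .inl (by simpa [← mem_neighborSet, hw] using hadj)

lemma SimpleGraph.Connected.nonempty_iso_K2_of_neighborSet_eq (hc : G.Connected)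
    (hu : G.neighborSet u = {w}) (hw : G.neighborSet w = {u}) : Nonempty (G ≃g K2) := by
  have huw := adj_of_neighborSet_eq_singleton hu
  have hcover := hc.eq_or_eq_of_neighborSet_eq hu hw
  have hcard : Nat.card V = 2 :=
    Nat.card_eq_two_iff.mpr ⟨u, w, huw.ne, Set.eq_univ_of_forall fun x => hcover x⟩
  have : Finite V := Nat.finite_of_card_ne_zero (by omega)
  have htop : G = ⊤ := by
    ext x y
    refine ⟨Adj.ne, fun hxy => ?_⟩
    rcases hcover x with rfl | rfl <;> rcases hcover y with rfl | rfl <;>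
      first | exact absurd rfl hxy | exact huw | exact huw.symm
  subst htop
  exact ⟨Iso.completeGraph (Finite.equivFinOfCardEq hcard)⟩

lemma setOf_sibling_eq_singleton_of_neighborSet_eq (hc : G.Connected)
    (hK2 : ¬ Nonempty (G ≃g K2)) (hu : G.neighborSet u = {w}) : {v | Sibling G u v} = {u} := by
  refine Set.eq_singleton_iff_unique_mem.mpr ⟨rfl, fun v hs => ?_⟩
  by_contra hvu
  obtain ⟨rfl, hw⟩ := eq_and_neighborSet_eq_of_sibling hu hs hvu
  exact hK2 (hc.nonempty_iso_K2_of_neighborSet_eq hu hw)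

lemma rho_neighborSet_mk_eq_singleton (hcls : {v | Sibling G u v} = {u})
    (hu : G.neighborSet u = {w}) :
    (rho G).neighborSet (Quotient.mk (siblingSetoid G) u) = {Quotient.mk (siblingSetoid G) w} := by
  have hmk : ∀ x, Quotient.mk (siblingSetoid G) x = Quotient.mk (siblingSetoid G) u → x = u :=
    fun x hx => hcls.subset (Quotient.exact hx).symm
  have huw := adj_of_neighborSet_eq_singleton hu
  ext B
  constructor
  · rintro ⟨-, x, y, hx, rfl, hxy⟩
    obtain rfl := hmk x hx
    rw [← mem_neighborSet, hu] at hxy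
    rw [Set.mem_singleton_iff.mp hxy]
    rfl
  · rintro rfl
    exact ⟨fun h => huw.ne' (hmk w h.symm), u, w, rfl, rfl, huw⟩

end

theorem leaf_sibling_class_singleton_general {V : Type} (H : SimpleGraph V)
    (hc : H.Connected) (hK2 : ¬ Nonempty (H ≃g K2)) (u : V) (hu : IsLeaf H u) :
    {v : V | Sibling H u v} = {u} ∧
    IsLeaf (rho H) (Quotient.mk (siblingSetoid H) u) := by
  obtain ⟨w, hw⟩ := isLeaf_iff_exists_neighborSet_eq_singleton.mp hu
  have hcls := setOf_sibling_eq_singleton_of_neighborSet_eq hc hK2 hw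
  exact ⟨hcls, isLeaf_iff_exists_neighborSet_eq_singleton.mpr
    ⟨_, rho_neighborSet_mk_eq_singleton hcls hw⟩⟩

/-- In a connected graph `H` other than `K2`, the sibling class of a leaf `u` is the
singleton `{u}`, and this class is a leaf of the quotient graph `ρ(H)`. -/
theorem leaf_sibling_class_singleton {V : Type} [Fintype V] (H : SimpleGraph V)
    (hc : H.Connected) (hK2 : ¬ Nonempty (H ≃g K2)) (u : V) (hu : IsLeaf H u) :
    {v : V | Sibling H u v} = {u} ∧
    IsLeaf (rho H) (Quotient.mk (siblingSetoid H) u) :=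
  leaf_sibling_class_singleton_general H hc hK2 u hu
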